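/- Suppose ζ satisfies Properties P1–P4 and P5′. Then the limit ζ̄ := lim_{s→∞} s^{-d}·ζ*(Q_s) exists in [0,∞), where ζ*(A) := sup{ζ(𝒳) : 𝒳 ⊆ A finite}. Moreover, for every λ > 0, λ·ρ(λ) ≤ ζ̄, where ρ(λ) := lim_{s→∞} E[ζ(H_{λ,s})]/(λ s^d) (this limit exists under P1–P4). -/

import Mathlib

/-! Cutting `Q_{ms}` into `m^d` translates of `Q_s`, translation invariance and almost
subadditivity give `ζ*(Q_{ms}) ≤ m^d (ζ*(Q_s) + c₁)`; P5′ applied to cubes of side `1/d`,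
which fit in a ball of radius `1/2`, makes every `ζ*(Q_s)` finite. Since `s ↦ ζ*(Q_s)` is
monotone, a Fekete-type argument then shows that `s^{-d} ζ*(Q_s)` converges to
`inf_s s^{-d} (ζ*(Q_s) + c₁)`. Finally `H_{λ,s} ⊆ Q_s` almost surely, so
`E ζ(H_{λ,s}) ≤ ζ*(Q_s)`, which gives `λ ρ(λ) ≤ ζ̄`. -/

open MeasureTheory ProbabilityTheory Filter Set Metric Bornology
open scoped Classical ENNReal NNReal symmDiff

noncomputable section

/-- Points of `ℝ^d`. -/
abbrev Pt (d : ℕ) := EuclideanSpace ℝ (Fin d)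

/-- The half-open cube `Q_s = [-s/2, s/2)^d`. -/
def cube (d : ℕ) (s : ℝ) : Set (Pt d) := {x | ∀ i, x i ∈ Set.Ico (-(s / 2)) (s / 2)}

/-- The uniform distribution on `Q_s`. -/
def unifCube (d : ℕ) (s : ℝ) : Measure (Pt d) :=
  (volume (cube d s))⁻¹ • volume.restrict (cube d s)

/-- `E[ζ(H_{λ,s})]`, where `H_{λ,s} = {Y_1, …, Y_N}` with `N` a Poisson random variable of
mean `λ s^d` independent of an i.i.d. sequence `Y_1, Y_2, …` of uniform points of `Q_s`. -/
def poissonExp (d : ℕ) (zeta : Finset (Pt d) → ℝ) (lam s : ℝ) : ℝ :=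
  ∑' k : ℕ, (Real.exp (-(lam * s ^ d)) * (lam * s ^ d) ^ k / (Nat.factorial k : ℝ)) *
    ∫ y : Fin k → Pt d, zeta (Finset.image y Finset.univ) ∂(Measure.pi fun _ => unifCube d s)

/-- `|∂_Z(Y)|`: the number of points of `Y` lying within Euclidean distance 1 of `Z`. -/
def bdry (d : ℕ) (Y Z : Finset (Pt d)) : ℕ :=
  {y ∈ (Y : Set (Pt d)) | ∃ z ∈ Z, dist y z ≤ 1}.ncard

/-- The rescaled set `r⁻¹ 𝒳`. -/
def scaleSet (d : ℕ) (r : ℝ) (X : Finset (Pt d)) : Finset (Pt d) :=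
  X.image fun x => r⁻¹ • x

/-- `ζ*(A) = sup {ζ(X) : X ⊆ A finite}`. -/
def zetaStar (d : ℕ) (zeta : Finset (Pt d) → ℝ) (A : Set (Pt d)) : ℝ :=
  sSup {t | ∃ X : Finset (Pt d), (X : Set (Pt d)) ⊆ A ∧ t = zeta X}

/-- Domination number of the geometric graph `G(X, r)`. -/
def domNum (d : ℕ) (r : ℝ) (X : Finset (Pt d)) : ℕ :=
  sInf {n | ∃ A ⊆ X, A.card = n ∧ ∀ x ∈ X, ∃ a ∈ A, dist x a ≤ r}

/-- Independence number of the geometric graph `G(X, r)`. -/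
def indepNum (d : ℕ) (r : ℝ) (X : Finset (Pt d)) : ℕ :=
  sSup {n | ∃ A ⊆ X, A.card = n ∧ ∀ x ∈ A, ∀ y ∈ A, x ≠ y → r < dist x y}

/-- Clique-covering number of the geometric graph `G(X, r)`. -/
def cliqueCoverNum (d : ℕ) (r : ℝ) (X : Finset (Pt d)) : ℕ :=
  sInf {n | ∃ P : Finset (Finset (Pt d)), P.card = n ∧
    (∀ C ∈ P, C ⊆ X ∧ C.Nonempty ∧ ∀ x ∈ C, ∀ y ∈ C, x ≠ y → dist x y ≤ r) ∧
    ∀ x ∈ X, ∃! C, C ∈ P ∧ x ∈ C}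

/-- Vertex cover number of the geometric graph `G(X, r)`. -/
def vcNum (d : ℕ) (r : ℝ) (X : Finset (Pt d)) : ℕ :=
  sInf {n | ∃ A ⊆ X, A.card = n ∧
    ∀ x ∈ X, ∀ y ∈ X, x ≠ y → dist x y ≤ r → x ∈ A ∨ y ∈ A}

/-- Number of isolated vertices of the geometric graph `G(X, r)`. -/
def isolCount (d : ℕ) (r : ℝ) (X : Finset (Pt d)) : ℕ :=
  {x ∈ (X : Set (Pt d)) | ∀ y ∈ X, y ≠ x → r < dist x y}.ncard

/-- `κ(A)`: the minimal number of closed unit balls whose union contains `A`. -/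
def covNum (d : ℕ) (A : Set (Pt d)) : ℕ :=
  sInf {n | ∃ C : Finset (Pt d), C.card = n ∧ A ⊆ ⋃ x ∈ C, Metric.closedBall x 1}

/-- `α*(A)`: the maximum cardinality of a finite subset of `A` with pairwise distances `> 1`. -/
def packNum (d : ℕ) (A : Set (Pt d)) : ℕ :=
  sSup {n | ∃ X : Finset (Pt d), (X : Set (Pt d)) ⊆ A ∧ X.card = n ∧
    ∀ x ∈ X, ∀ y ∈ X, x ≠ y → 1 < dist x y}

/-- `γ*(A) = sup {γ(G(X,1)) : X ⊆ A finite}`. -/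
def domStar (d : ℕ) (A : Set (Pt d)) : ℕ :=
  sSup {n | ∃ X : Finset (Pt d), (X : Set (Pt d)) ⊆ A ∧ domNum d 1 X = n}

/-- Minimum weight of a travelling salesman tour through `X`, for the weight function `w`
(a tour is a Hamiltonian cycle of the complete graph on `X`, and an edge `{x,y}` has
weight `w (x - y)`), with the convention that the value is `0` when `|X| ≤ 2`. -/
def TSPw (d : ℕ) (w : Pt d → ℝ) (X : Finset (Pt d)) : ℝ :=
  if h : 3 ≤ X.card then
    haveI : NeZero X.card := ⟨by omega⟩
    sInf {t | ∃ g : Fin X.card → Pt d, Function.Injective g ∧ (∀ i, g i ∈ X) ∧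
      t = ∑ i, w (g (i + 1) - g i)}
  else 0

/-- Maximum `H`-packing number of the geometric graph `G(X, r)`. -/
def hPackNum {V : Type} [Fintype V] (H : SimpleGraph V) (d : ℕ) (r : ℝ)
    (X : Finset (Pt d)) : ℕ :=
  sSup {m | ∃ φ : Fin m → V → Pt d,
    (∀ i, Function.Injective (φ i)) ∧ (∀ i v, φ i v ∈ X) ∧
    (∀ i u v, H.Adj u v → dist (φ i u) (φ i v) ≤ r) ∧
    (∀ i j, i ≠ j → ∀ u v, φ i u ≠ φ j v)}

section Subadditive

variable {α : Type*} [DecidableEq α] {ζ : Finset α → ℝ} {c₁ : ℝ}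

theorem le_sum_filter_add_card_mul {ι : Type*} [DecidableEq ι] (h0 : ζ ∅ = 0)
    (hsub : ∀ Y Z : Finset α, Disjoint Y Z → ζ (Y ∪ Z) ≤ ζ Y + ζ Z + c₁)
    (c : α → ι) (T : Finset ι) (X : Finset α) (hX : ∀ x ∈ X, c x ∈ T) :
    ζ X ≤ ∑ v ∈ T, ζ (X.filter (c · = v)) + c₁ * T.card := by
  induction T using Finset.induction_on generalizing X with
  | empty =>
    obtain rfl : X = ∅ := Finset.eq_empty_of_forall_notMem fun x hx => by simpa using hX x hx
    simp [h0]
  | insert a T ha ih =>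
    have hrest : ∀ x ∈ X.filter (c · ≠ a), c x ∈ T := by
      intro x hx
      obtain ⟨hxX, hxa⟩ := Finset.mem_filter.mp hx
      exact (Finset.mem_insert.mp (hX x hxX)).resolve_left hxa
    have hfilter : ∀ v ∈ T, (X.filter (c · ≠ a)).filter (c · = v) = X.filter (c · = v) := by
      intro v hv
      rw [Finset.filter_filter]
      exact Finset.filter_congr fun x _ => ⟨And.right, fun h => ⟨h ▸ ne_of_mem_of_not_mem hv ha, h⟩⟩
    have hsplit := hsub _ _ (Finset.disjoint_filter_filter_not X X (c · = a))
    rw [Finset.filter_union_filter_not_eq] at hsplit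
    have hT := ih _ hrest
    rw [Finset.sum_congr rfl fun v hv => congrArg ζ (hfilter v hv)] at hT
    rw [Finset.sum_insert ha, Finset.card_insert_of_notMem ha]
    push_cast
    linarith

theorem le_of_forall_add_mem [Add α]
    (htrans : ∀ (X : Finset α) (x : α), ζ (X.image fun y => x + y) = ζ X)
    {A : Set α} {B : ℝ} (hB : ∀ X : Finset α, (X : Set α) ⊆ A → ζ X ≤ B)
    {X : Finset α} (x : α) (hX : ∀ y ∈ X, x + y ∈ A) : ζ X ≤ B := by
  rw [← htrans X x]
  apply hB
  simpa [Set.subset_def] using hX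

end Subadditive

section Cube

variable {d : ℕ}

theorem mem_cube {s : ℝ} {x : Pt d} : x ∈ cube d s ↔ ∀ i, -(s / 2) ≤ x i ∧ x i < s / 2 := by
  simp [cube]

theorem cube_mono : Monotone (cube d) := by
  intro s t hst x hx i
  obtain ⟨h1, h2⟩ := mem_cube.mp hx i
  constructor <;> linarith

theorem cube_subset_closedBall (s : ℝ) : cube d s ⊆ closedBall 0 (d * (s / 2)) := by
  intro x hx
  let b := EuclideanSpace.basisFun (Fin d) ℝ
  rw [mem_closedBall_zero_iff]
  calc ‖x‖ = ‖∑ i, x i • b i‖ := by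
        conv_lhs => rw [← b.sum_repr x]
        simp [b]
    _ ≤ ∑ i, ‖x i • b i‖ := norm_sum_le _ _
    _ = ∑ i, |x i| := by simp [b, norm_smul]
    _ ≤ ∑ _i : Fin d, s / 2 := Finset.sum_le_sum fun i _ =>
        abs_le.mpr ⟨(mem_cube.mp hx i).1, (mem_cube.mp hx i).2.le⟩
    _ = d * (s / 2) := by simp

theorem cube_eq_preimage_pi (s : ℝ) :
    cube d s = WithLp.ofLp ⁻¹' Set.pi univ fun _ => Set.Ico (-(s / 2)) (s / 2) := by
  ext x; simp [cube]

theorem measurableSet_cube (s : ℝ) : MeasurableSet (cube d s) :=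
  cube_eq_preimage_pi s ▸
    (MeasurableSet.univ_pi fun _ => measurableSet_Ico).preimage (WithLp.measurable_ofLp 2 _)

theorem volume_cube (s : ℝ) : volume (cube d s) = ENNReal.ofReal s ^ d := by
  rw [cube_eq_preimage_pi, (PiLp.volume_preserving_ofLp (Fin d)).measure_preimage
    (MeasurableSet.univ_pi fun _ => measurableSet_Ico).nullMeasurableSet, Real.volume_pi_Ico]
  simp

def cubeCell (m : ℕ) (s : ℝ) (x : Pt d) : Fin d → ℤ := fun i => ⌊(x i + m * s / 2) / s⌋

theorem cubeCell_mem_piFinset {m : ℕ} {s : ℝ} (hs : 0 < s) {x : Pt d} (hx : x ∈ cube d (m * s)) :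
    cubeCell m s x ∈ Fintype.piFinset fun _ => Finset.Icc 0 ((m : ℤ) - 1) := by
  rw [Fintype.mem_piFinset]
  intro i
  obtain ⟨h1, h2⟩ := mem_cube.mp hx i
  have hlt : cubeCell m s x i < m := by
    rw [cubeCell, Int.floor_lt, div_lt_iff₀ hs]
    push_cast
    linarith
  exact Finset.mem_Icc.mpr ⟨Int.floor_nonneg.mpr (div_nonneg (by linarith) hs.le), by omega⟩

theorem add_mem_cube_of_cubeCell_eq {m : ℕ} {s : ℝ} (hs : 0 < s) (v : Fin d → ℤ) {x : Pt d}
    (hx : cubeCell m s x = v) :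
    WithLp.toLp 2 (fun i => m * s / 2 - v i * s - s / 2) + x ∈ cube d s := by
  refine mem_cube.mpr fun i => ?_
  have h1 : (v i : ℝ) ≤ (x i + m * s / 2) / s := hx ▸ Int.floor_le _
  have h2 : (x i + m * s / 2) / s < v i + 1 := hx ▸ Int.lt_floor_add_one _
  rw [le_div_iff₀ hs] at h1
  rw [div_lt_iff₀ hs] at h2
  simp only [PiLp.add_apply]
  constructor <;> linarith

end Cube

section ZetaCube

variable {d : ℕ} {ζ : Finset (Pt d) → ℝ} {c₁ : ℝ}

theorem zeta_le_of_subset_cube_mul (h0 : ζ ∅ = 0)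
    (htrans : ∀ (X : Finset (Pt d)) (x : Pt d), ζ (X.image fun y => x + y) = ζ X)
    (hsub : ∀ Y Z : Finset (Pt d), Disjoint Y Z → ζ (Y ∪ Z) ≤ ζ Y + ζ Z + c₁)
    {s B : ℝ} (hs : 0 < s) (hB : ∀ X : Finset (Pt d), (X : Set (Pt d)) ⊆ cube d s → ζ X ≤ B)
    (m : ℕ) {X : Finset (Pt d)} (hX : (X : Set (Pt d)) ⊆ cube d (m * s)) :
    ζ X ≤ m ^ d * (B + c₁) := by
  set T := Fintype.piFinset fun _ : Fin d => Finset.Icc 0 ((m : ℤ) - 1)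
  have hcard : (T.card : ℝ) = m ^ d := by rw [Fintype.card_piFinset]; simp
  have hcell (v) (_ : v ∈ T) : ζ (X.filter (cubeCell m s · = v)) ≤ B :=
    le_of_forall_add_mem htrans hB _ fun x hx =>
      add_mem_cube_of_cubeCell_eq hs v (Finset.mem_filter.mp hx).2
  calc ζ X ≤ ∑ v ∈ T, ζ (X.filter (cubeCell m s · = v)) + c₁ * T.card :=
        le_sum_filter_add_card_mul h0 hsub _ T X fun x hx => cubeCell_mem_piFinset hs (hX hx)
    _ ≤ ∑ _v ∈ T, B + c₁ * T.card := by gcongr with v hv; exact hcell v hv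
    _ = m ^ d * (B + c₁) := by rw [Finset.sum_const, nsmul_eq_mul, hcard]; ring

theorem bddAbove_zeta_cube (hd : d ≠ 0) (h0 : ζ ∅ = 0)
    (htrans : ∀ (X : Finset (Pt d)) (x : Pt d), ζ (X.image fun y => x + y) = ζ X)
    (hsub : ∀ Y Z : Finset (Pt d), Disjoint Y Z → ζ (Y ∪ Z) ≤ ζ Y + ζ Z + c₁)
    {M : ℝ} (hM : ∀ X : Finset (Pt d), (X : Set (Pt d)) ⊆ closedBall 0 (1 / 2) → ζ X ≤ M)
    (s : ℝ) : BddAbove {t | ∃ X : Finset (Pt d), (X : Set (Pt d)) ⊆ cube d s ∧ t = ζ X} := by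
  have hd' : (0 : ℝ) < d := by positivity
  have hunit : ∀ X : Finset (Pt d), (X : Set (Pt d)) ⊆ cube d (1 / d) → ζ X ≤ M := fun X hX =>
    hM X <| hX.trans <| (cube_subset_closedBall _).trans_eq <| by field_simp
  set m := ⌈s * d⌉₊
  have hs : cube d s ⊆ cube d (m * (1 / d)) := cube_mono <| by
    rw [← div_eq_mul_one_div, le_div_iff₀ hd']
    exact Nat.le_ceil _
  refine ⟨m ^ d * (M + c₁), ?_⟩
  rintro _ ⟨X, hX, rfl⟩
  exact zeta_le_of_subset_cube_mul h0 htrans hsub (by positivity) hunit m (hX.trans hs)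

end ZetaCube

section ZetaStar

variable {d : ℕ} {ζ : Finset (Pt d) → ℝ} {A : Set (Pt d)}

theorem le_zetaStar (hA : BddAbove {t | ∃ X : Finset (Pt d), (X : Set (Pt d)) ⊆ A ∧ t = ζ X})
    {X : Finset (Pt d)} (hX : (X : Set (Pt d)) ⊆ A) : ζ X ≤ zetaStar d ζ A :=
  le_csSup hA ⟨X, hX, rfl⟩

theorem zetaStar_le {B : ℝ} (hB : ∀ X : Finset (Pt d), (X : Set (Pt d)) ⊆ A → ζ X ≤ B) :
    zetaStar d ζ A ≤ B :=
  csSup_le ⟨ζ ∅, ∅, by simp, rfl⟩ fun _ ⟨X, hX, hX'⟩ => hX' ▸ hB X hX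

theorem zetaStar_nonneg (h0 : ζ ∅ = 0)
    (hA : BddAbove {t | ∃ X : Finset (Pt d), (X : Set (Pt d)) ⊆ A ∧ t = ζ X}) :
    0 ≤ zetaStar d ζ A :=
  h0 ▸ le_zetaStar hA (by simp)

theorem zetaStar_mono {A' : Set (Pt d)} (hAA' : A ⊆ A')
    (hA' : BddAbove {t | ∃ X : Finset (Pt d), (X : Set (Pt d)) ⊆ A' ∧ t = ζ X}) :
    zetaStar d ζ A ≤ zetaStar d ζ A' :=
  zetaStar_le fun _ hX => le_zetaStar hA' (hX.trans hAA')

end ZetaStar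

section Scaling

variable {F : ℝ → ℝ} {c : ℝ} {d : ℕ}

theorem div_pow_le_of_le_pow_mul (hF0 : ∀ t, 0 ≤ F t) (hc : 0 ≤ c) (hmono : Monotone F)
    (hmul : ∀ (m : ℕ) (s : ℝ), 0 < s → F (m * s) ≤ m ^ d * (F s + c))
    {s t : ℝ} (hs : 0 < s) (ht : 0 < t) :
    F t / t ^ d ≤ (1 + s / t) ^ d * ((F s + c) / s ^ d) := by
  set m := ⌈t / s⌉₊
  have hms : t ≤ m * s := (div_le_iff₀ hs).mp (Nat.le_ceil _)
  have hms' : m * s ≤ t + s := by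
    have hm : (m : ℝ) ≤ t / s + 1 := (Nat.ceil_lt_add_one (div_nonneg ht.le hs.le)).le
    calc (m : ℝ) * s ≤ (t / s + 1) * s := by gcongr
      _ = t + s := by field_simp
  calc F t / t ^ d ≤ (m * s) ^ d * ((F s + c) / s ^ d) / t ^ d := by
        gcongr
        rw [mul_pow, mul_assoc, mul_div_cancel₀ _ (by positivity)]
        exact (hmono hms).trans (hmul m s hs)
    _ ≤ (t + s) ^ d * ((F s + c) / s ^ d) / t ^ d := by
        gcongr
        · exact div_nonneg (add_nonneg (hF0 s) hc) (by positivity)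
    _ = (1 + s / t) ^ d * ((F s + c) / s ^ d) := by rw [one_add_div ht.ne', div_pow]; ring

theorem tendsto_div_pow_of_le_pow_mul (hd : d ≠ 0) (hF0 : ∀ t, 0 ≤ F t) (hc : 0 ≤ c)
    (hmono : Monotone F) (hmul : ∀ (m : ℕ) (s : ℝ), 0 < s → F (m * s) ≤ m ^ d * (F s + c)) :
    Tendsto (fun t => F t / t ^ d) atTop (nhds (⨅ s : Ioi (0 : ℝ), (F s + c) / (s : ℝ) ^ d)) := by
  set g : Ioi (0 : ℝ) → ℝ := fun s => (F s + c) / (s : ℝ) ^ d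
  have hg : BddBelow (range g) :=
    ⟨0, by rintro _ ⟨s, rfl⟩; exact div_nonneg (add_nonneg (hF0 s) hc) (pow_pos s.2 d).le⟩
  refine tendsto_order.mpr ⟨fun a ha => ?_, fun a ha => ?_⟩
  · have hct : Tendsto (fun t : ℝ => iInf g - c / t ^ d) atTop (nhds (iInf g)) := by
      simpa using
        tendsto_const_nhds.sub (tendsto_const_nhds.div_atTop (tendsto_pow_atTop (α := ℝ) hd))
    filter_upwards [hct.eventually_const_lt ha, eventually_gt_atTop 0] with t hat ht
    have hgt : g ⟨t, ht⟩ = F t / t ^ d + c / t ^ d := add_div _ _ _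
    linarith [ciInf_le hg ⟨t, ht⟩]
  · obtain ⟨s, hs⟩ := exists_lt_of_ciInf_lt ha
    have hlim : Tendsto (fun t : ℝ => (1 + s / t) ^ d * g s) atTop (nhds ((1 + 0) ^ d * g s)) :=
      ((tendsto_const_nhds.add (tendsto_const_nhds.div_atTop tendsto_id)).pow d).mul_const _
    rw [add_zero, one_pow, one_mul] at hlim
    filter_upwards [hlim.eventually_lt_const hs, eventually_gt_atTop 0] with t hlt ht
    exact (div_pow_le_of_le_pow_mul hF0 hc hmono hmul s.2 ht).trans_lt hlt

end Scaling

theorem tsum_mul_le_of_hasSum_one {ι : Type*} {p a : ι → ℝ} {B : ℝ} (hp : HasSum p 1)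
    (hp0 : ∀ i, 0 ≤ p i) (ha0 : ∀ i, 0 ≤ a i) (haB : ∀ i, a i ≤ B) : ∑' i, p i * a i ≤ B := by
  have hpB : HasSum (fun i => p i * B) B := by simpa using hp.mul_right B
  have hle (i) : p i * a i ≤ p i * B := mul_le_mul_of_nonneg_left (haB i) (hp0 i)
  exact (Summable.of_nonneg_of_le (fun i => mul_nonneg (hp0 i) (ha0 i)) hle hpB.summable)
    |>.tsum_le_tsum hle hpB.summable |>.trans_eq hpB.tsum_eq

theorem integral_zeta_image_le {α : Type*} [MeasurableSpace α] [DecidableEq α]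
    {ζ : Finset α → ℝ} {μ : Measure α} [IsProbabilityMeasure μ] {A : Set α} {B : ℝ} {k : ℕ}
    (hζ : ∀ X, 0 ≤ ζ X) (hA : ∀ᵐ x ∂μ, x ∈ A) (hB : ∀ X : Finset α, (X : Set α) ⊆ A → ζ X ≤ B) :
    ∫ y : Fin k → α, ζ (Finset.image y Finset.univ) ∂(Measure.pi fun _ => μ) ≤ B := by
  have hmem : ∀ᵐ y : Fin k → α ∂(Measure.pi fun _ => μ), ∀ i : Fin k, y i ∈ A :=
    ae_all_iff.mpr fun i => (Measure.tendsto_eval_ae_ae (i := i)).eventually hA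
  have hle : ∀ᵐ y : Fin k → α ∂(Measure.pi fun _ => μ), ζ (Finset.image y Finset.univ) ≤ B := by
    filter_upwards [hmem] with y hy
    exact hB _ (by simpa [Set.subset_def] using hy)
  simpa using integral_mono_of_nonneg (.of_forall fun y => hζ _) (integrable_const B) hle

section Poisson

variable {d : ℕ}

theorem isProbabilityMeasure_unifCube {s : ℝ} (hs : 0 < s) : IsProbabilityMeasure (unifCube d s) :=
  cond_isProbabilityMeasure_of_finite (by simp [volume_cube, hs]) (by simp [volume_cube])

theorem ae_unifCube_mem_cube (s : ℝ) : ∀ᵐ x ∂unifCube d s, x ∈ cube d s :=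
  ae_cond_mem (measurableSet_cube s)

theorem poissonExp_le {ζ : Finset (Pt d) → ℝ} (hζ : ∀ X, 0 ≤ ζ X) {lam s B : ℝ} (hlam : 0 ≤ lam)
    (hs : 0 < s) (hB : ∀ X : Finset (Pt d), (X : Set (Pt d)) ⊆ cube d s → ζ X ≤ B) :
    poissonExp d ζ lam s ≤ B :=
  have := isProbabilityMeasure_unifCube (d := d) hs
  tsum_mul_le_of_hasSum_one (hasSum_one_poissonMeasure ⟨lam * s ^ d, by positivity⟩)
    (fun _ => by positivity) (fun _ => integral_nonneg fun _ => hζ _)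
    (fun _ => integral_zeta_image_le hζ (ae_unifCube_mem_cube s) hB)

end Poisson

theorem zetaStar_limit_exists_and_bounds_general {d : ℕ} (hd : 1 ≤ d)
    (zeta : Finset (Pt d) → ℝ) (hzeta0 : zeta ∅ = 0) (hzetann : ∀ X, 0 ≤ zeta X)
    -- P2 (translation invariance)
    (hP2 : ∀ (X : Finset (Pt d)) (x : Pt d), zeta (X.image fun y => x + y) = zeta X)
    (c1 : ℝ) (hc1 : 0 ≤ c1)
    -- P3 (almost subadditivity)
    (hP3 : ∀ Y Z : Finset (Pt d), Disjoint Y Z → zeta (Y ∪ Z) ≤ zeta Y + zeta Z + c1)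
    -- P5′ (local uniform boundedness)
    (hP5' : ∃ M : ℝ, ∀ X : Finset (Pt d),
      (X : Set (Pt d)) ⊆ Metric.closedBall 0 (1 / 2) → zeta X ≤ M) :
    ∃ zbar : ℝ, 0 ≤ zbar ∧
      Tendsto (fun s : ℝ => zetaStar d zeta (cube d s) / s ^ d) atTop (nhds zbar) ∧
      ∀ lam : ℝ, 0 < lam → ∀ R : ℝ,
        Tendsto (fun s : ℝ => poissonExp d zeta lam s / (lam * s ^ d)) atTop (nhds R) →
        lam * R ≤ zbar := by
  obtain ⟨M, hM⟩ := hP5'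
  have hbdd := bddAbove_zeta_cube (by omega) hzeta0 hP2 hP3 hM
  have hlim := tendsto_div_pow_of_le_pow_mul (by omega)
    (fun s => zetaStar_nonneg hzeta0 (hbdd s)) hc1
    (fun s t hst => zetaStar_mono (cube_mono hst) (hbdd t))
    (fun m s hs => zetaStar_le fun X hX =>
      zeta_le_of_subset_cube_mul hzeta0 hP2 hP3 hs (fun Y hY => le_zetaStar (hbdd s) hY) m hX)
  refine ⟨_, ge_of_tendsto hlim ?_, hlim, fun lam hlam R hR => ?_⟩
  · filter_upwards [eventually_gt_atTop 0] with s hs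
    exact div_nonneg (zetaStar_nonneg hzeta0 (hbdd s)) (by positivity)
  have hle : ∀ᶠ s in atTop, poissonExp d zeta lam s / (lam * s ^ d) ≤
      zetaStar d zeta (cube d s) / s ^ d / lam := by
    filter_upwards [eventually_gt_atTop 0] with s hs
    rw [div_div, mul_comm (s ^ d)]
    gcongr
    exact poissonExp_le hzetann hlam.le hs fun X hX => le_zetaStar (hbdd s) hX
  have hR_le := le_of_tendsto_of_tendsto hR (hlim.div_const lam) hle
  rwa [le_div_iff₀ hlam, mul_comm] at hR_le

/-- under P1–P4 and P5′, the limit `ζ̄ = lim s^{-d} ζ*(Q_s)` exists in `[0,∞)`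
and `λ·ρ(λ) ≤ ζ̄` for every `λ > 0`. -/
theorem zetaStar_limit_exists_and_bounds {d : ℕ} (hd : 1 ≤ d)
    (zeta : Finset (Pt d) → ℝ) (hzeta0 : zeta ∅ = 0) (hzetann : ∀ X, 0 ≤ zeta X)
    -- P1 (measurability)
    (hP1 : ∀ k : ℕ, Measurable fun y : Fin k → Pt d => zeta (Finset.image y Finset.univ))
    -- P2 (translation invariance)
    (hP2 : ∀ (X : Finset (Pt d)) (x : Pt d), zeta (X.image fun y => x + y) = zeta X)
    (c1 c2 : ℝ) (hc1 : 0 ≤ c1) (hc2 : 0 ≤ c2)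
    -- P3 (almost subadditivity)
    (hP3 : ∀ Y Z : Finset (Pt d), Disjoint Y Z → zeta (Y ∪ Z) ≤ zeta Y + zeta Z + c1)
    -- P4 (superadditivity up to boundary)
    (hP4 : ∀ Y Z : Finset (Pt d), Disjoint Y Z →
      zeta Y + zeta Z - c2 * (bdry d Y Z : ℝ) ≤ zeta (Y ∪ Z))
    -- P5′ (local uniform boundedness)
    (hP5' : ∃ M : ℝ, ∀ X : Finset (Pt d),
      (X : Set (Pt d)) ⊆ Metric.closedBall 0 (1 / 2) → zeta X ≤ M) :
    ∃ zbar : ℝ, 0 ≤ zbar ∧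
      Tendsto (fun s : ℝ => zetaStar d zeta (cube d s) / s ^ d) atTop (nhds zbar) ∧
      ∀ lam : ℝ, 0 < lam → ∀ R : ℝ,
        Tendsto (fun s : ℝ => poissonExp d zeta lam s / (lam * s ^ d)) atTop (nhds R) →
        lam * R ≤ zbar :=
  zetaStar_limit_exists_and_bounds_general hd zeta hzeta0 hzetann hP2 c1 hc1 hP3 hP5'

end
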